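/- Let M¹ be a matroid on ground set E¹ ⊆ [n] and M² a matroid on ground set E² ⊆ [n] with E¹ ∪ E² = [n], and let M be the matroid union of M¹ and M² (on ground set [n]). Then for every weight vector w ∈ ℝ^n_{≥0}, the weighted matroid rank valuation of M equals the merge of the weighted matroid rank valuations of M¹ and M²: ρ^w_M = ρ^{w¹}_{M¹} * ρ^{w²}_{M²}, where w¹ and w² denote the restrictions of w to E¹ and E² respectively. -/
import Mathlib


open Finset

variable {α : Type*} [DecidableEq α]

/-- A valuation on ground set `E`: zero at the empty set, non-negative,
and monotone on subsets of `E`. -/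
def IsValuation (E : Finset α) (u : Finset α → ℝ) : Prop :=
  u ∅ = 0 ∧ (∀ S : Finset α, S ⊆ E → 0 ≤ u S) ∧
    ∀ ⦃S T : Finset α⦄, S ⊆ T → T ⊆ E → u S ≤ u T

/-- Gross substitutes valuation on ground set `E`: a valuation satisfying the
M♮-exchange property. -/
def GrossSubstitutes (E : Finset α) (u : Finset α → ℝ) : Prop :=
  IsValuation E u ∧
    ∀ ⦃S T : Finset α⦄, S ⊆ E → T ⊆ E → ∀ i ∈ S \ T,
      u S + u T ≤ u (S.erase i) + u (insert i T) ∨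
        ∃ j ∈ T \ S,
          u S + u T ≤ u (insert j (S.erase i)) + u ((insert i T).erase j)

/-- The merge (convolution) of a valuation `u1` on `E1` and `u2` on `E2`:
`(u1 * u2)(S) = max { u1 S1 + u2 S2 : S = S1 ∪ S2, S1 ∩ S2 = ∅, S1 ⊆ E1, S2 ⊆ E2 }`. -/
noncomputable def mergeVal (E1 E2 : Finset α) (u1 u2 : Finset α → ℝ)
    (S : Finset α) : ℝ :=
  sSup {x : ℝ | ∃ S1 S2 : Finset α, S = S1 ∪ S2 ∧ Disjoint S1 S2 ∧
    S1 ⊆ E1 ∧ S2 ⊆ E2 ∧ x = u1 S1 + u2 S2}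

/-- A (finite) matroid with ground set `E`, given by its independent sets. -/
structure FinMatroid (α : Type*) [DecidableEq α] where
  E : Finset α
  Indep : Finset α → Prop
  indep_empty : Indep ∅
  indep_subset : ∀ ⦃I J : Finset α⦄, Indep J → I ⊆ J → Indep I
  indep_aug : ∀ ⦃I J : Finset α⦄, Indep I → Indep J → I.card < J.card →
    ∃ e ∈ J, e ∉ I ∧ Indep (insert e I)
  subset_ground : ∀ ⦃I : Finset α⦄, Indep I → I ⊆ E

/-- The weighted matroid rank valuation:
`ρ^w(T) = max { ∑_{i ∈ I} w i : I independent, I ⊆ T }`. -/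
noncomputable def weightedRank (M : FinMatroid α) (w : α → ℝ) (T : Finset α) : ℝ :=
  sSup {x : ℝ | ∃ I : Finset α, M.Indep I ∧ I ⊆ T ∧ x = ∑ i ∈ I, w i}

/-- `M` is the matroid union of `M1` and `M2`. -/
def IsMatroidUnion (M M1 M2 : FinMatroid α) : Prop :=
  M.E = M1.E ∪ M2.E ∧
    ∀ I : Finset α, M.Indep I ↔
      ∃ I1 I2 : Finset α, M1.Indep I1 ∧ M2.Indep I2 ∧ I = I1 ∪ I2

/-- A matroid is irreducible under matroid union if whenever it is a union of
two matroids, one of them equals the matroid itself. -/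
def MatroidIrreducible (M : FinMatroid α) : Prop :=
  ∀ M1 M2 : FinMatroid α, IsMatroidUnion M M1 M2 → M1 = M ∨ M2 = M


section Aux

variable [Fintype α]

lemma wr_set_finite (M : FinMatroid α) (w : α → ℝ) (T : Finset α) :
    {x : ℝ | ∃ I : Finset α, M.Indep I ∧ I ⊆ T ∧ x = ∑ i ∈ I, w i}.Finite := by
  apply Set.Finite.subset (Set.finite_range (fun I : Finset α => ∑ i ∈ I, w i))
  rintro x ⟨I, -, -, rfl⟩
  exact ⟨I, rfl⟩

lemma wr_set_nonempty (M : FinMatroid α) (w : α → ℝ) (T : Finset α) :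
    {x : ℝ | ∃ I : Finset α, M.Indep I ∧ I ⊆ T ∧ x = ∑ i ∈ I, w i}.Nonempty :=
  ⟨0, ∅, M.indep_empty, Finset.empty_subset _, (Finset.sum_empty).symm⟩

lemma le_weightedRank (M : FinMatroid α) (w : α → ℝ) {I T : Finset α}
    (hI : M.Indep I) (hIT : I ⊆ T) : ∑ i ∈ I, w i ≤ weightedRank M w T :=
  le_csSup (wr_set_finite M w T).bddAbove ⟨I, hI, hIT, rfl⟩

lemma exists_weightedRank (M : FinMatroid α) (w : α → ℝ) (T : Finset α) :
    ∃ I : Finset α, M.Indep I ∧ I ⊆ T ∧ weightedRank M w T = ∑ i ∈ I, w i :=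
  (wr_set_nonempty M w T).csSup_mem (wr_set_finite M w T)

lemma merge_set_finite (E1 E2 : Finset α) (u1 u2 : Finset α → ℝ) (S : Finset α) :
    {x : ℝ | ∃ S1 S2 : Finset α, S = S1 ∪ S2 ∧ Disjoint S1 S2 ∧
      S1 ⊆ E1 ∧ S2 ⊆ E2 ∧ x = u1 S1 + u2 S2}.Finite := by
  apply Set.Finite.subset
    (Set.finite_range (fun p : Finset α × Finset α => u1 p.1 + u2 p.2))
  rintro x ⟨S1, S2, -, -, -, -, rfl⟩
  exact ⟨(S1, S2), rfl⟩

lemma le_mergeVal (E1 E2 : Finset α) (u1 u2 : Finset α → ℝ) {S S1 S2 : Finset α}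
    (h : S = S1 ∪ S2) (hd : Disjoint S1 S2) (h1 : S1 ⊆ E1) (h2 : S2 ⊆ E2) :
    u1 S1 + u2 S2 ≤ mergeVal E1 E2 u1 u2 S :=
  le_csSup (merge_set_finite E1 E2 u1 u2 S).bddAbove ⟨S1, S2, h, hd, h1, h2, rfl⟩

end Aux

/-- The weighted rank valuation of a matroid union is the merge of the
weighted rank valuations of the constituent matroids. -/
theorem weightedRank_matroidUnion_eq_merge (n : ℕ)
    (M M1 M2 : FinMatroid (Fin n)) (hU : IsMatroidUnion M M1 M2)
    (hE : M.E = Finset.univ) (w : Fin n → ℝ) (hw : ∀ i, 0 ≤ w i) :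
    weightedRank M w =
      mergeVal M1.E M2.E (weightedRank M1 w) (weightedRank M2 w) := by
  funext T
  have hEU : M1.E ∪ M2.E = Finset.univ := hU.1 ▸ hE
  apply le_antisymm
  · -- weightedRank M ≤ mergeVal
    apply csSup_le (wr_set_nonempty M w T)
    rintro x ⟨I, hI, hIT, rfl⟩
    obtain ⟨I1, I2, hI1, hI2, hIeq⟩ := (hU.2 I).1 hI
    set I2' : Finset (Fin n) := I2 \ I1 with hI2'
    have hI2'indep : M2.Indep I2' := M2.indep_subset hI2 (Finset.sdiff_subset)
    have hIeq' : I = I1 ∪ I2' := by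
      rw [hIeq, hI2', Finset.union_sdiff_self_eq_union]
    set S1 : Finset (Fin n) := (T ∩ M1.E) \ I2' with hS1
    set S2 : Finset (Fin n) := T \ S1 with hS2
    have hS1T : S1 ⊆ T := (Finset.sdiff_subset).trans (Finset.inter_subset_left)
    have hT : T = S1 ∪ S2 := (Finset.union_sdiff_of_subset hS1T).symm
    have hdisj : Disjoint S1 S2 := Finset.disjoint_sdiff
    have hS1E : S1 ⊆ M1.E := (Finset.sdiff_subset).trans (Finset.inter_subset_right)
    have hS2E : S2 ⊆ M2.E := by
      intro x hx
      rw [hS2, Finset.mem_sdiff] at hx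
      obtain ⟨hxT, hxS1⟩ := hx
      by_cases hx2 : x ∈ I2'
      · exact M2.subset_ground hI2 (Finset.sdiff_subset hx2)
      · have hxE1 : x ∉ M1.E := fun hxE1 =>
          hxS1 (by rw [hS1, Finset.mem_sdiff]; exact ⟨Finset.mem_inter.2 ⟨hxT, hxE1⟩, hx2⟩)
        have : x ∈ M1.E ∪ M2.E := hEU ▸ Finset.mem_univ x
        rcases Finset.mem_union.1 this with h | h
        · exact absurd h hxE1
        · exact h
    have hI1S1 : I1 ⊆ S1 := by
      intro x hx
      rw [hS1, Finset.mem_sdiff, Finset.mem_inter]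
      refine ⟨⟨hIT (hIeq ▸ Finset.mem_union_left _ hx), M1.subset_ground hI1 hx⟩, ?_⟩
      rw [hI2', Finset.mem_sdiff]
      exact fun h => h.2 hx
    have hI2S2 : I2' ⊆ S2 := by
      intro x hx
      rw [hS2, Finset.mem_sdiff]
      refine ⟨hIT (hIeq' ▸ Finset.mem_union_right _ hx), ?_⟩
      rw [hS1, Finset.mem_sdiff]
      exact fun h => h.2 hx
    have hdI : Disjoint I1 I2' := Finset.disjoint_sdiff
    calc ∑ i ∈ I, w i = ∑ i ∈ I1, w i + ∑ i ∈ I2', w i := by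
          rw [hIeq', Finset.sum_union hdI]
      _ ≤ weightedRank M1 w S1 + weightedRank M2 w S2 :=
          add_le_add (le_weightedRank M1 w hI1 hI1S1) (le_weightedRank M2 w hI2'indep hI2S2)
      _ ≤ mergeVal M1.E M2.E (weightedRank M1 w) (weightedRank M2 w) T :=
          le_mergeVal _ _ _ _ hT hdisj hS1E hS2E
  · -- mergeVal ≤ weightedRank M
    have hne : {x : ℝ | ∃ S1 S2 : Finset (Fin n), T = S1 ∪ S2 ∧ Disjoint S1 S2 ∧
        S1 ⊆ M1.E ∧ S2 ⊆ M2.E ∧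
        x = weightedRank M1 w S1 + weightedRank M2 w S2}.Nonempty := by
      refine ⟨_, T ∩ M1.E, T \ (T ∩ M1.E), ?_, Finset.disjoint_sdiff,
        Finset.inter_subset_right, ?_, rfl⟩
      · rw [Finset.union_sdiff_of_subset (Finset.inter_subset_left)]
      · intro x hx
        rw [Finset.mem_sdiff, Finset.mem_inter] at hx
        have : x ∈ M1.E ∪ M2.E := hEU ▸ Finset.mem_univ x
        rcases Finset.mem_union.1 this with h | h
        · exact absurd ⟨hx.1, h⟩ hx.2
        · exact h
    apply csSup_le hne
    rintro x ⟨S1, S2, hT, hdisj, hS1E, hS2E, rfl⟩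
    obtain ⟨I1, hI1, hI1S, h1eq⟩ := exists_weightedRank M1 w S1
    obtain ⟨I2, hI2, hI2S, h2eq⟩ := exists_weightedRank M2 w S2
    have hIind : M.Indep (I1 ∪ I2) := (hU.2 _).2 ⟨I1, I2, hI1, hI2, rfl⟩
    have hIT : I1 ∪ I2 ⊆ T := hT ▸ Finset.union_subset_union hI1S hI2S
    have hdI : Disjoint I1 I2 := hdisj.mono hI1S hI2S
    calc weightedRank M1 w S1 + weightedRank M2 w S2
        = ∑ i ∈ I1 ∪ I2, w i := by rw [h1eq, h2eq, Finset.sum_union hdI]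
      _ ≤ weightedRank M w T := le_weightedRank M w hIind hIT
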